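/- Let ℏ ∈ ℂ be nonzero, u ∈ ℂ, and let W be a right U_ℏ(𝔪_2)-module on which E_{21} − 1 acts locally nilpotently. Define P(u) : W → W by P(u)(w) = ∑_{k ≥ 0} ℏ^{−k}·(1/k!)·w·(E_{21}−1)^k·(E_{11}+u)(E_{11}+u−ℏ)⋯(E_{11}+u−(k−1)ℏ). Then P(u)(w·(E_{11} + u)) = 0 for every w ∈ W. -/

import Mathlib

noncomputable section
open MulOpposite

/-- Defining relation of `U_ℏ(𝔪_2)`: generators `E_{11}` (= `true`) and `E_{21}` (= `false`)
with `E_{11}E_{21} − E_{21}E_{11} = −ℏE_{21}`. -/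
inductive m2Rel (ℏ : ℂ) : FreeAlgebra ℂ Bool → FreeAlgebra ℂ Bool → Prop
  | comm : m2Rel ℏ (FreeAlgebra.ι ℂ true * FreeAlgebra.ι ℂ false)
      (FreeAlgebra.ι ℂ false * FreeAlgebra.ι ℂ true - ℏ • FreeAlgebra.ι ℂ false)

/-- `U_ℏ(𝔪_2)`. -/
abbrev Um2 (ℏ : ℂ) : Type := RingQuot (m2Rel ℏ)

/-- The generator `E_{11}`. -/
def E11 (ℏ : ℂ) : Um2 ℏ := RingQuot.mkAlgHom ℂ (m2Rel ℏ) (FreeAlgebra.ι ℂ true)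

/-- The generator `E_{21}`. -/
def E21 (ℏ : ℂ) : Um2 ℏ := RingQuot.mkAlgHom ℂ (m2Rel ℏ) (FreeAlgebra.ι ℂ false)

/-- The truncated sum
`∑_{k<n} ℏ^{−k}(1/k!) w·(E_{21}−1)^k·(E_{11}+u)(E_{11}+u−ℏ)⋯(E_{11}+u−(k−1)ℏ)`;
when `w·(E_{21}−1)^n = 0` this is the (locally finite) value `P(u)(w)` of the
Kirillov projector for `𝔪_2`. -/
def kirP2 (ℏ u : ℂ) {W : Type*} [AddCommGroup W] [Module ℂ W] [Module (Um2 ℏ)ᵐᵒᵖ W]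
    (n : ℕ) (w : W) : W :=
  ∑ k ∈ Finset.range n, (ℏ⁻¹ ^ k * ((Nat.factorial k : ℂ))⁻¹) •
    (op ((E21 ℏ - 1) ^ k *
      (List.ofFn fun i : Fin k => E11 ℏ + algebraMap ℂ (Um2 ℏ) (u - (i : ℕ) * ℏ)).prod) • w)

/- ### Auxiliary development -/

local notation "C" => algebraMap ℂ (Um2 _)

lemma E11_mul_E21 (ℏ : ℂ) : E11 ℏ * E21 ℏ = E21 ℏ * E11 ℏ - ℏ • E21 ℏ := by
  have := RingQuot.mkAlgHom_rel ℂ (m2Rel.comm (ℏ := ℏ))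
  simpa [E11, E21, map_mul, map_sub, map_smul] using this

lemma comm1 (ℏ c : ℂ) : (E11 ℏ + C c) * (E21 ℏ - 1)
    = (E21 ℏ - 1) * (E11 ℏ + C (c - ℏ)) - C ℏ := by
  simp only [mul_sub, sub_mul, mul_add, add_mul, mul_one, one_mul, map_sub, E11_mul_E21,
    Algebra.smul_def]
  rw [Algebra.commutes c (E21 ℏ), Algebra.commutes ℏ (E21 ℏ)]
  abel

lemma comm_pow (ℏ u : ℂ) (k : ℕ) : (E11 ℏ + C u) * (E21 ℏ - 1) ^ (k + 1)
    = (E21 ℏ - 1) ^ (k + 1) * (E11 ℏ + C (u - ((k : ℂ) + 1) * ℏ))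
      - C (((k : ℂ) + 1) * ℏ) * (E21 ℏ - 1) ^ k := by
  induction k with
  | zero => simpa using comm1 ℏ u
  | succ k ih =>
      have step : (E11 ℏ + C u) * (E21 ℏ - 1) ^ (k + 2)
          = ((E11 ℏ + C u) * (E21 ℏ - 1) ^ (k + 1)) * (E21 ℏ - 1) := by
        rw [pow_succ, mul_assoc]
      have h1 : u - ((k : ℂ) + 1) * ℏ - ℏ = u - (((k + 1 : ℕ) : ℂ) + 1) * ℏ := by
        push_cast; ring
      have e2 : (E21 ℏ - 1) ^ (k+1) * C ℏ + C (((k : ℂ) + 1) * ℏ) * (E21 ℏ - 1) ^ (k + 1)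
          = C ((((k + 1 : ℕ) : ℂ) + 1) * ℏ) * (E21 ℏ - 1) ^ (k + 1) := by
        rw [← Algebra.commutes ℏ ((E21 ℏ - 1) ^ (k+1)), ← add_mul, ← map_add]
        congr 2
        push_cast; ring
      rw [step, ih, sub_mul, mul_assoc _ _ (E21 ℏ - 1), comm1, mul_sub, ← mul_assoc,
        ← pow_succ, mul_assoc (C (((k : ℂ) + 1) * ℏ)), ← pow_succ, h1, sub_sub, e2]

def Pfun (ℏ u : ℂ) (k : ℕ) : Um2 ℏ :=
  (List.ofFn fun i : Fin k => E11 ℏ + C (u - (i : ℕ) * ℏ)).prod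

set_option maxRecDepth 10000 in
lemma Pfun_succ (ℏ u : ℂ) (k : ℕ) :
    Pfun ℏ u (k + 1) = Pfun ℏ u k * (E11 ℏ + C (u - (k : ℂ) * ℏ)) := by
  unfold Pfun
  rw [List.ofFn_succ', List.concat_eq_append, List.prod_append, List.prod_singleton]
  norm_num [Fin.val_last, Fin.coe_castSucc]

lemma commE (ℏ a b : ℂ) : (E11 ℏ + C a) * (E11 ℏ + C b) = (E11 ℏ + C b) * (E11 ℏ + C a) := by
  rw [add_mul, add_mul, mul_add, mul_add, mul_add, mul_add,
    Algebra.commutes a (E11 ℏ), Algebra.commutes b (E11 ℏ),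
    ← map_mul, ← map_mul, mul_comm a b]
  abel

lemma commP (ℏ u b : ℂ) (k : ℕ) :
    (E11 ℏ + C b) * Pfun ℏ u k = Pfun ℏ u k * (E11 ℏ + C b) := by
  refine (Commute.list_prod_right _ _ fun y hy => ?_).symm.eq.symm
  obtain ⟨i, rfl⟩ := List.mem_ofFn.mp hy
  exact commE ℏ b (u - (i : ℕ) * ℏ)

lemma Pfun_zero (ℏ u : ℂ) : Pfun ℏ u 0 = 1 := by simp [Pfun]

lemma Pfun_one (ℏ u : ℂ) : Pfun ℏ u 1 = E11 ℏ + C u := by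
  rw [Pfun_succ, Pfun_zero]
  norm_num

lemma key (ℏ u : ℂ) (k : ℕ) :
    (E11 ℏ + C u) * ((E21 ℏ - 1) ^ (k+1) * Pfun ℏ u (k+1))
      = (E21 ℏ - 1) ^ (k+1) * Pfun ℏ u (k+2)
        - C (((k : ℂ) + 1) * ℏ) * ((E21 ℏ - 1) ^ k * Pfun ℏ u (k+1)) := by
  have hc : u - ((k : ℂ) + 1) * ℏ = u - (((k+1 : ℕ) : ℂ)) * ℏ := by push_cast; ring
  rw [← mul_assoc, comm_pow, sub_mul, mul_assoc, commP, hc, ← Pfun_succ, mul_assoc]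

set_option linter.unusedSectionVars false

section ModuleW

variable {ℏ u : ℂ} {W : Type*} [AddCommGroup W] [Module ℂ W] [Module (Um2 ℏ)ᵐᵒᵖ W]
  [IsScalarTower ℂ (Um2 ℏ)ᵐᵒᵖ W]

lemma hsm (a b : Um2 ℏ) (x : W) : op (a * b) • x = op b • (op a • x) := by
  rw [op_mul, mul_smul]

lemma hCs (a : ℂ) (y : Um2 ℏ) (x : W) :
    op (algebraMap ℂ (Um2 ℏ) a * y) • x = a • (op y • x) := by
  rw [← Algebra.smul_def, op_smul, smul_assoc]

/-- The telescoping partial value. -/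
def gAux (ℏ u : ℂ) {W : Type*} [AddCommGroup W] [Module ℂ W] [Module (Um2 ℏ)ᵐᵒᵖ W]
    (w : W) (k : ℕ) : W :=
  (ℏ⁻¹ ^ k * ((Nat.factorial k : ℂ))⁻¹) • (op ((E21 ℏ - 1) ^ k * Pfun ℏ u (k+1)) • w)

lemma hcoef (ℏ : ℂ) (hℏ : ℏ ≠ 0) (k : ℕ) :
    (ℏ⁻¹ ^ (k+1) * ((Nat.factorial (k+1) : ℂ))⁻¹) * (((k : ℂ) + 1) * ℏ)
      = ℏ⁻¹ ^ k * ((Nat.factorial k : ℂ))⁻¹ := by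
  have h1 : ((Nat.factorial k : ℂ)) ≠ 0 := Nat.cast_ne_zero.mpr (Nat.factorial_ne_zero k)
  have h2 : ((k : ℂ) + 1) ≠ 0 := Nat.cast_add_one_ne_zero k
  rw [Nat.factorial_succ]
  push_cast
  field_simp
  ring
  rw [mul_inv_cancel₀ hℏ, one_mul]

lemma termS (hℏ : ℏ ≠ 0) (w : W) (k : ℕ) :
    (ℏ⁻¹ ^ (k+1) * ((Nat.factorial (k+1) : ℂ))⁻¹) •
        (op ((E21 ℏ - 1) ^ (k+1) * Pfun ℏ u (k+1)) • (op (E11 ℏ + C u) • w))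
      = gAux ℏ u w (k+1) - gAux ℏ u w k := by
  rw [← hsm, key, op_sub, sub_smul, smul_sub, hCs, smul_smul, hcoef ℏ hℏ k]
  rfl

lemma gstep (hℏ : ℏ ≠ 0) (w : W) (k : ℕ)
    (h : op ((E21 ℏ - 1) ^ (k+1)) • (op (E11 ℏ + C u) • w) = 0) :
    gAux ℏ u w (k+1) = gAux ℏ u w k := by
  have hx : op ((E21 ℏ - 1) ^ (k+1) * Pfun ℏ u (k+2)) • w
      = (((k : ℂ) + 1) * ℏ) • (op ((E21 ℏ - 1) ^ k * Pfun ℏ u (k+1)) • w) := by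
    have := congrArg (fun z : Um2 ℏ => op z • w) (key ℏ u k)
    rw [op_sub, sub_smul, hCs] at this
    have h2 : op ((E11 ℏ + C u) * ((E21 ℏ - 1) ^ (k+1) * Pfun ℏ u (k+1))) • w = 0 := by
      rw [hsm, hsm, h, smul_zero]
    rw [h2] at this
    exact (sub_eq_zero.mp this.symm)
  unfold gAux
  rw [hx, smul_smul, hcoef ℏ hℏ k]

lemma kirP2_succ_eq (hℏ : ℏ ≠ 0) (w : W) (n : ℕ) :
    kirP2 ℏ u (n+1) (op (E11 ℏ + C u) • w) = gAux ℏ u w n := by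
  induction n with
  | zero =>
      unfold kirP2
      rw [Finset.sum_range_one]
      simp [gAux, Pfun_one]
  | succ n ih =>
      unfold kirP2 at *
      rw [Finset.sum_range_succ, ih]
      have e : (List.ofFn fun i : Fin (n+1) => E11 ℏ + algebraMap ℂ (Um2 ℏ) (u - (i : ℕ) * ℏ)).prod
          = Pfun ℏ u (n+1) := rfl
      rw [e, termS hℏ w n]
      abel

end ModuleW

theorem statement14 (ℏ : ℂ) (hℏ : ℏ ≠ 0) (u : ℂ)
    (W : Type*) [AddCommGroup W] [Module ℂ W] [Module (Um2 ℏ)ᵐᵒᵖ W]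
    [IsScalarTower ℂ (Um2 ℏ)ᵐᵒᵖ W]
    (hW : ∀ w : W, ∃ n : ℕ, op ((E21 ℏ - 1) ^ n) • w = 0)
    (w : W) (n : ℕ)
    (hn : op ((E21 ℏ - 1) ^ n) • (op (E11 ℏ + algebraMap ℂ (Um2 ℏ) u) • w) = 0) :
    kirP2 ℏ u n (op (E11 ℏ + algebraMap ℂ (Um2 ℏ) u) • w) = 0 := by
  obtain ⟨m, hm⟩ := hW w
  cases n with
  | zero => simp [kirP2]
  | succ j =>
      rw [kirP2_succ_eq hℏ]
      have vup : ∀ i, op ((E21 ℏ - 1) ^ (j+1+i)) • (op (E11 ℏ + C u) • w) = 0 := by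
        intro i
        induction i with
        | zero => simpa using hn
        | succ i ih =>
            rw [show j+1+(i+1) = (j+1+i)+1 from rfl, pow_succ, hsm, ih, smul_zero]
      have geq : ∀ i, gAux ℏ u w (j + i) = gAux ℏ u w j := by
        intro i
        induction i with
        | zero => rfl
        | succ i ih =>
            rw [show j + (i+1) = (j+i)+1 from rfl,
              gstep hℏ w (j+i) (by rw [show (j+i)+1 = j+1+i by omega]; exact vup i), ih]
      have hzero : gAux ℏ u w (j + m) = 0 := by
        have h0 : op ((E21 ℏ - 1) ^ (j + m)) • w = 0 := by
          rw [show j + m = m + j by omega, pow_add, hsm, hm, smul_zero]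
        unfold gAux
        rw [hsm, h0, smul_zero, smul_zero]
      rw [← geq m, hzero]
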